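/- arXiv:2206.14840 — 5 statements merged into one kernel-verified Lean document; each statement's English description precedes it below -/
import Mathlib

section
/- Let S be a commutative ternary semigroup. Then the operation on S × S defined by ((a₁,b₁),(a₂,b₂)) ↦ (μ(a₁,b₁,a₂), b₂) is associative, so S × S becomes a binary semigroup. -/
/-- The binary "hetero power" product on pairs: `(a₁,b₁) • (a₂,b₂) = (μ(a₁,b₁,a₂), b₂)`. -/
def hop {S : Type*} (μ : S → S → S → S) (p q : S × S) : S × S :=
  (μ p.1 p.2 q.1, q.2)

theorem hetero_square_binary_assoc_general {S : Type*} (μ : S → S → S → S)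
    (hassoc : ∀ a b c d e : S,
      μ (μ a b c) d e = μ a (μ b c d) e ∧ μ a (μ b c d) e = μ a b (μ c d e)) :
    ∀ p q r : S × S, hop μ (hop μ p q) r = hop μ p (hop μ q r) := fun p q r =>
  let ⟨h₁, h₂⟩ := hassoc p.1 p.2 q.1 q.2 r.1
  Prod.ext (h₁.trans h₂) rfl

/-- For a commutative (totally associative) ternary semigroup `S`, the binary
operation `(a₁,b₁) • (a₂,b₂) = (μ(a₁,b₁,a₂), b₂)` on `S × S` is associative. -/
theorem hetero_square_binary_assoc {S : Type*} (μ : S → S → S → S)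
    (hassoc : ∀ a b c d e : S,
      μ (μ a b c) d e = μ a (μ b c d) e ∧ μ a (μ b c d) e = μ a b (μ c d e))
    (hcomm : ∀ a b c : S, μ a b c = μ b a c ∧ μ a b c = μ a c b) :
    ∀ p q r : S × S, hop μ (hop μ p q) r = hop μ p (hop μ q r) :=
  hetero_square_binary_assoc_general μ hassoc
end

section
/- Let S be a commutative 5-ary semigroup. Then the ternary operation on S × S defined by μ'((a₁,b₁),(a₂,b₂),(a₃,b₃)) = (μ(a₁,b₂,a₃,b₁,a₂), b₃) is totally associative, so S × S becomes a ternary semigroup. -/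
/-!
Write `μ₉(x₁, …, x₉)` for `μ(μ(x₁, …, x₅), x₆, …, x₉)`. Commutativity makes `μ₉` symmetric in
its first five and in its last four arguments, and associativity lets `x₅` and `x₆` trade places,
so `μ₉` is invariant under all permutations of its arguments. By associativity the first
components of the three bracketings of `μ'` are `μ₉` of the same nine letters in different
orders, and their second components all equal the intact element `b₃` of the last factor.
-/

/-- The ternary hetero power product (with one intact element) on pairs built
from a 5-ary operation: `μ'((a₁,b₁),(a₂,b₂),(a₃,b₃)) = (μ(a₁,b₂,a₃,b₁,a₂), b₃)`. -/
def op3of5 {S : Type*} (μ : S → S → S → S → S → S) (p q r : S × S) : S × S :=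
  (μ p.1 q.2 r.1 p.2 q.1, r.2)

namespace FiveAry

variable {S : Type*}

def IsTotallyAssoc (μ : S → S → S → S → S → S) : Prop :=
  ∀ x1 x2 x3 x4 x5 x6 x7 x8 x9 : S,
    μ (μ x1 x2 x3 x4 x5) x6 x7 x8 x9 = μ x1 (μ x2 x3 x4 x5 x6) x7 x8 x9 ∧
    μ x1 (μ x2 x3 x4 x5 x6) x7 x8 x9 = μ x1 x2 (μ x3 x4 x5 x6 x7) x8 x9 ∧
    μ x1 x2 (μ x3 x4 x5 x6 x7) x8 x9 = μ x1 x2 x3 (μ x4 x5 x6 x7 x8) x9 ∧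
    μ x1 x2 x3 (μ x4 x5 x6 x7 x8) x9 = μ x1 x2 x3 x4 (μ x5 x6 x7 x8 x9)

def IsComm (μ : S → S → S → S → S → S) : Prop :=
  ∀ a b c d e : S,
    μ a b c d e = μ b a c d e ∧ μ a b c d e = μ a c b d e ∧
    μ a b c d e = μ a b d c e ∧ μ a b c d e = μ a b c e d

def mu9 (μ : S → S → S → S → S → S) (x1 x2 x3 x4 x5 x6 x7 x8 x9 : S) : S :=
  μ (μ x1 x2 x3 x4 x5) x6 x7 x8 x9

variable {μ : S → S → S → S → S → S} {x1 x2 x3 x4 x5 x6 x7 x8 x9 : S}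

theorem mu_mu_mid_eq_mu9 (hassoc : IsTotallyAssoc μ) :
    μ x1 x2 (μ x3 x4 x5 x6 x7) x8 x9 = mu9 μ x1 x2 x3 x4 x5 x6 x7 x8 x9 := by
  obtain ⟨h1, h2, -⟩ := hassoc x1 x2 x3 x4 x5 x6 x7 x8 x9
  rw [mu9, h1, h2]

theorem mu_mu_last_eq_mu9 (hassoc : IsTotallyAssoc μ) :
    μ x1 x2 x3 x4 (μ x5 x6 x7 x8 x9) = mu9 μ x1 x2 x3 x4 x5 x6 x7 x8 x9 := by
  obtain ⟨h1, h2, h3, h4⟩ := hassoc x1 x2 x3 x4 x5 x6 x7 x8 x9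
  rw [mu9, h1, h2, h3, h4]

theorem mu9_swap23 (hcomm : IsComm μ) :
    mu9 μ x1 x2 x3 x4 x5 x6 x7 x8 x9 = mu9 μ x1 x3 x2 x4 x5 x6 x7 x8 x9 := by
  rw [mu9, (hcomm x1 x2 x3 x4 x5).2.1, mu9]

theorem mu9_swap34 (hcomm : IsComm μ) :
    mu9 μ x1 x2 x3 x4 x5 x6 x7 x8 x9 = mu9 μ x1 x2 x4 x3 x5 x6 x7 x8 x9 := by
  rw [mu9, (hcomm x1 x2 x3 x4 x5).2.2.1, mu9]

theorem mu9_swap45 (hcomm : IsComm μ) :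
    mu9 μ x1 x2 x3 x4 x5 x6 x7 x8 x9 = mu9 μ x1 x2 x3 x5 x4 x6 x7 x8 x9 := by
  rw [mu9, (hcomm x1 x2 x3 x4 x5).2.2.2, mu9]

theorem mu9_swap56 (hassoc : IsTotallyAssoc μ) (hcomm : IsComm μ) :
    mu9 μ x1 x2 x3 x4 x5 x6 x7 x8 x9 = mu9 μ x1 x2 x3 x4 x6 x5 x7 x8 x9 := by
  rw [mu9, (hassoc x1 x2 x3 x4 x5 x6 x7 x8 x9).1, (hcomm x2 x3 x4 x5 x6).2.2.2,
    ← (hassoc x1 x2 x3 x4 x6 x5 x7 x8 x9).1, mu9]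

theorem mu9_swap67 (hcomm : IsComm μ) :
    mu9 μ x1 x2 x3 x4 x5 x6 x7 x8 x9 = mu9 μ x1 x2 x3 x4 x5 x7 x6 x8 x9 := by
  rw [mu9, (hcomm (μ x1 x2 x3 x4 x5) x6 x7 x8 x9).2.1, mu9]

theorem mu9_swap78 (hcomm : IsComm μ) :
    mu9 μ x1 x2 x3 x4 x5 x6 x7 x8 x9 = mu9 μ x1 x2 x3 x4 x5 x6 x8 x7 x9 := by
  rw [mu9, (hcomm (μ x1 x2 x3 x4 x5) x6 x7 x8 x9).2.2.1, mu9]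

theorem mu9_swap89 (hcomm : IsComm μ) :
    mu9 μ x1 x2 x3 x4 x5 x6 x7 x8 x9 = mu9 μ x1 x2 x3 x4 x5 x6 x7 x9 x8 := by
  rw [mu9, (hcomm (μ x1 x2 x3 x4 x5) x6 x7 x8 x9).2.2.2, mu9]

end FiveAry

open FiveAry in
/-- For a commutative 5-ary semigroup `S`, the ternary hetero power product on
`S × S` with one intact element is totally associative. -/
theorem hetero_power_5ary_to_ternary {S : Type*} (μ : S → S → S → S → S → S)
    (hassoc : ∀ x1 x2 x3 x4 x5 x6 x7 x8 x9 : S,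
      μ (μ x1 x2 x3 x4 x5) x6 x7 x8 x9 = μ x1 (μ x2 x3 x4 x5 x6) x7 x8 x9 ∧
      μ x1 (μ x2 x3 x4 x5 x6) x7 x8 x9 = μ x1 x2 (μ x3 x4 x5 x6 x7) x8 x9 ∧
      μ x1 x2 (μ x3 x4 x5 x6 x7) x8 x9 = μ x1 x2 x3 (μ x4 x5 x6 x7 x8) x9 ∧
      μ x1 x2 x3 (μ x4 x5 x6 x7 x8) x9 = μ x1 x2 x3 x4 (μ x5 x6 x7 x8 x9))
    (hcomm : ∀ a b c d e : S,
      μ a b c d e = μ b a c d e ∧ μ a b c d e = μ a c b d e ∧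
      μ a b c d e = μ a b d c e ∧ μ a b c d e = μ a b c e d) :
    ∀ p q r s t : S × S,
      op3of5 μ (op3of5 μ p q r) s t = op3of5 μ p (op3of5 μ q r s) t ∧
      op3of5 μ p (op3of5 μ q r s) t = op3of5 μ p q (op3of5 μ r s t) := by
  rintro ⟨a, b⟩ ⟨c, d⟩ ⟨e, f⟩ ⟨g, h⟩ ⟨i, j⟩
  simp only [op3of5, Prod.mk.injEq, and_true, mu_mu_mid_eq_mu9 hassoc, mu_mu_last_eq_mu9 hassoc,
    ← mu9.eq_1]
  -- Ordered rewriting with adjacent transpositions sorts the arguments after the common first one.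
  simp only [mu9_swap23 hcomm, mu9_swap34 hcomm, mu9_swap45 hcomm,
    mu9_swap56 hassoc hcomm, mu9_swap67 hcomm, mu9_swap78 hcomm, mu9_swap89 hcomm, and_self]
end

section
/- Let S be a commutative m-ary semigroup. The polyadic gauge relation ((a₁,b₁) ∼ (a₂,b₂) iff ∃x,y ∈ S with μ(a₁^{m−1},x) = μ(a₂^{m−1},y) and μ(b₁^{m−1},x) = μ(b₂^{m−1},y)) coincides with the polyadic twisted relation ((a₁,b₁) ∼ (a₂,b₂) iff ∃z with μ∘²(a₁^{m−1},b₂^{m−1},z) = μ∘²(a₂^{m−1},b₁^{m−1},z)), provided m ≥ 2 and S is nonempty (so that suitable elements t₁,...,t_{m−2} exist). -/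
/-!
Write `a • x` for `μ(a^{m-1}, x)`. Total associativity moves the inner product of
`μ(a^{m-1}, μ(g))` to the first factor, and commutativity then to any factor: a translation of a
product can be absorbed into any single factor. In particular translations commute, which gives
`⇐` with `x = b₂ • z`, `y = b₁ • z`. For `⇒` take `z = μ(x, y, t, …, t)`: the two twisted
products become `μ(a₁ • x, b₂ • y, t, …)` and `μ(a₂ • y, b₁ • x, t, …)`, which agree by the
hypotheses after swapping the first two factors.
-/

/-- The `m`-tuple `(a, …, a, x)` (the element `a` repeated `m-1` times, then `x`). -/
def repv {S : Type*} (m : ℕ) (a x : S) : Fin m → S :=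
  fun i => if i.val < m - 1 then a else x

/-- The iterated product `μ∘²` on a polyad of `2m-1` elements `g 0, …, g (2m-2)`,
with the inner multiplication placed at position `k`. -/
def place {S : Type*} (m : ℕ) (μ : (Fin m → S) → S) (k : ℕ) (g : ℕ → S) : S :=
  μ (fun i => if i.val < k then g i.val
      else if i.val = k then μ (fun j => g (k + j.val))
      else g (i.val + m - 1))

/-- Total associativity of an `m`-ary operation: all placements of the inner
multiplication in the twice-iterated product agree. -/
def TotAssoc {S : Type*} (m : ℕ) (μ : (Fin m → S) → S) : Prop :=
  ∀ (g : ℕ → S) (k l : ℕ), k < m → l < m → place m μ k g = place m μ l g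

/-- Full commutativity of an `m`-ary operation: invariance under all
permutations of the arguments. -/
def CommOp {S : Type*} (m : ℕ) (μ : (Fin m → S) → S) : Prop :=
  ∀ (g : Fin m → S) (σ : Equiv.Perm (Fin m)), μ (g ∘ σ) = μ g

/-- The twisted shift `μ∘²(a^{m-1}, b^{m-1}, z)`, computed as
`μ(a^{m-1}, μ(b^{m-1}, z))`. -/
def twist {S : Type*} (m : ℕ) (μ : (Fin m → S) → S) (a b z : S) : S :=
  μ (repv m a (μ (repv m b z)))

open Function

section
variable {S : Type*}

lemma TotAssoc.mu_repv_mu_eq_update_zero {n : ℕ} {μ : (Fin (n + 1) → S) → S}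
    (hassoc : TotAssoc (n + 1) μ) (a : S) (g : Fin (n + 1) → S) :
    μ (repv (n + 1) a (μ g)) = μ (update g 0 (μ (repv (n + 1) a (g 0)))) := by
  -- the polyad `(a, …, a, g 0, …, g n)` of length `2n + 1`
  let h : ℕ → S := fun k => if k < n then a else if hk : k - n < n + 1 then g ⟨k - n, hk⟩ else a
  have hlast : place (n + 1) μ n h = μ (repv (n + 1) a (μ g)) := by
    unfold place repv
    simp only [Nat.add_sub_cancel]
    congr 1; funext i
    have hi := i.isLt
    split_ifs <;> try omega
    all_goals try (congr 1; funext j)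
    all_goals simp only [h]; split_ifs
    all_goals first | rfl | omega | (congr 1; ext; simp; try omega)
  have hfirst : place (n + 1) μ 0 h = μ (update g 0 (μ (repv (n + 1) a (g 0)))) := by
    unfold place repv
    simp only [Nat.add_sub_cancel]
    congr 1; funext i
    rcases Fin.eq_zero_or_eq_succ i with rfl | ⟨i, rfl⟩
    · simp only [update_self, Fin.val_zero, lt_irrefl, if_false, if_true, zero_add]
      congr 1; funext j
      have hj := j.isLt
      simp only [h]; split_ifs
      all_goals first | rfl | omega | (congr 1; ext; simp; try omega)
    · simp only [Fin.val_succ, ne_eq, Fin.succ_ne_zero, not_false_eq_true, update_of_ne]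
      simp [h]; rfl
  rw [← hlast, ← hfirst, hassoc h n 0 (by omega) (by omega)]

variable {m : ℕ} {μ : (Fin m → S) → S}

lemma mu_repv_mu_eq_update (hassoc : TotAssoc m μ) (hcomm : CommOp m μ) (a : S)
    (g : Fin m → S) (i : Fin m) :
    μ (repv m a (μ g)) = μ (update g i (μ (repv m a (g i)))) := by
  obtain ⟨n, rfl⟩ : ∃ n, m = n + 1 := ⟨m - 1, by have := i.pos; omega⟩
  set σ := Equiv.swap 0 i
  calc μ (repv (n + 1) a (μ g))
      = μ (repv (n + 1) a (μ (g ∘ σ))) := by rw [hcomm]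
    _ = μ (update (g ∘ σ) 0 (μ (repv (n + 1) a (g i)))) := by
      rw [hassoc.mu_repv_mu_eq_update_zero]; simp [σ]
    _ = μ (update g i (μ (repv (n + 1) a (g i))) ∘ σ) := by
      rw [update_comp_equiv]; simp [σ]
    _ = μ (update g i (μ (repv (n + 1) a (g i)))) := hcomm _ _

lemma update_repv_last {n : ℕ} (a x y : S) :
    update (repv (n + 1) a x) (Fin.last n) y = repv (n + 1) a y := by
  funext i
  by_cases hi : i = Fin.last n
  · subst hi; simp [repv]
  · have : i.val < n := Fin.val_lt_last hi
    simp [repv, hi, this]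

lemma mu_repv_comm (hassoc : TotAssoc m μ) (hcomm : CommOp m μ) (hm : 0 < m) (a b z : S) :
    μ (repv m a (μ (repv m b z))) = μ (repv m b (μ (repv m a z))) := by
  obtain ⟨n, rfl⟩ : ∃ n, m = n + 1 := ⟨m - 1, by omega⟩
  rw [mu_repv_mu_eq_update hassoc hcomm a _ (Fin.last n), update_repv_last]
  simp [repv]

end

section
variable {S : Type*} {n : ℕ} {μ : (Fin (n + 2) → S) → S}

lemma mu_cons_cons_comm (hcomm : CommOp (n + 2) μ) (x y : S) (f : Fin n → S) :
    μ (Fin.cons x (Fin.cons y f)) = μ (Fin.cons y (Fin.cons x f)) := by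
  rw [← hcomm _ (Equiv.swap 0 1)]
  congr 1
  ext i
  refine Fin.cases ?_ (fun j => Fin.cases ?_ (fun k => ?_) j) i
  · simp
  · simp
  · rw [Function.comp_apply, Equiv.swap_apply_of_ne_of_ne (Fin.succ_ne_zero _)
      (by simp [Fin.ext_iff])]
    simp only [Fin.cons_succ]

lemma twist_mu_cons_cons (hassoc : TotAssoc (n + 2) μ) (hcomm : CommOp (n + 2) μ)
    (a b x y : S) (f : Fin n → S) :
    twist (n + 2) μ a b (μ (Fin.cons x (Fin.cons y f))) =
      μ (Fin.cons (μ (repv (n + 2) a x)) (Fin.cons (μ (repv (n + 2) b y)) f)) := by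
  rw [twist, mu_repv_mu_eq_update hassoc hcomm b _ (Fin.succ 0), ← Fin.cons_update,
    Fin.update_cons_zero, mu_repv_mu_eq_update hassoc hcomm a _ 0, Fin.update_cons_zero]
  simp only [Fin.cons_succ, Fin.cons_zero]

end

/-- For a nonempty commutative `m`-ary semigroup `S` with `m ≥ 2`, the polyadic
gauge relation coincides with the polyadic twisted relation on `S × S`. -/
theorem mary_gauge_iff_twist {S : Type*} [Nonempty S] (m : ℕ) (hm : 2 ≤ m)
    (μ : (Fin m → S) → S) (hassoc : TotAssoc m μ) (hcomm : CommOp m μ)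
    (a₁ b₁ a₂ b₂ : S) :
    (∃ x y : S, μ (repv m a₁ x) = μ (repv m a₂ y) ∧ μ (repv m b₁ x) = μ (repv m b₂ y))
      ↔ ∃ z : S, twist m μ a₁ b₂ z = twist m μ a₂ b₁ z := by
  obtain ⟨n, rfl⟩ : ∃ n, m = n + 2 := ⟨m - 2, by omega⟩
  constructor
  · rintro ⟨x, y, hx, hy⟩
    obtain ⟨t⟩ := ‹Nonempty S›
    let f : Fin n → S := fun _ => t
    refine ⟨μ (Fin.cons x (Fin.cons y f)), ?_⟩
    calc twist (n + 2) μ a₁ b₂ (μ (Fin.cons x (Fin.cons y f)))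
        = μ (Fin.cons (μ (repv (n + 2) a₂ y)) (Fin.cons (μ (repv (n + 2) b₁ x)) f)) := by
          rw [twist_mu_cons_cons hassoc hcomm, hx, hy]
      _ = twist (n + 2) μ a₂ b₁ (μ (Fin.cons x (Fin.cons y f))) := by
          rw [mu_cons_cons_comm hcomm x, twist_mu_cons_cons hassoc hcomm]
  · rintro ⟨z, hz⟩
    exact ⟨_, _, hz, mu_repv_comm hassoc hcomm (by omega) b₁ b₂ z⟩
end

section
/- In a commutative m-ary semigroup S, equip the quotient of S × S (by the twisted equivalence relation) with the componentwise m-ary product. Then the class of (μ(a,b^{m−1}), μ(a^{m−1},b)) is a querelement of the class of (a,b): the m-ary product of m−1 copies of [(a,b)] with this class equals [(a,b)]. -/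
open Function

section

variable {S : Type*}

def transl (m : ℕ) (μ : (Fin m → S) → S) (u t : S) : S := μ (repv m u t)

lemma CommOp.map_update_swap {m : ℕ} {μ : (Fin m → S) → S} (hcomm : CommOp m μ)
    (f : Fin m → S) (i k : Fin m) (x : S) :
    μ (update f i x) = μ (update (f ∘ Equiv.swap i k) k x) := by
  rw [← hcomm _ (Equiv.swap i k), update_comp_equiv, Equiv.symm_swap, Equiv.swap_apply_left]

variable {n : ℕ} {μ : (Fin (n + 1) → S) → S}

lemma repv_eq_update (a x : S) : repv (n + 1) a x = update (fun _ => a) (Fin.last n) x := by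
  funext i
  simp only [repv, update_apply, Fin.ext_iff, Fin.val_last]
  split_ifs <;> first | rfl | omega

/-- Both sides are placements, at positions `n` and `0`, of the inner product in
`μ∘²(f 0, …, f (n-1), g 0, …, g n)`. -/
lemma TotAssoc.map_update_last_map (hassoc : TotAssoc (n + 1) μ) (f g : Fin (n + 1) → S) :
    μ (update f (Fin.last n) (μ g)) = μ (update g 0 (μ (update f (Fin.last n) (g 0)))) := by
  let idx (k : ℕ) : Fin (n + 1) := ⟨min k n, by omega⟩
  let s : ℕ → S := fun k => if k < n then f (idx k) else g (idx (k - n))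
  have eL : place (n + 1) μ n s = μ (update f (Fin.last n) (μ g)) := by
    simp only [place, s]; congr 1; funext ⟨i, hi⟩
    simp only [update_apply, Fin.ext_iff, Fin.val_last]
    split_ifs <;> first | (exfalso; omega) | (congr 1; ext; dsimp only [idx]; omega) | skip
    congr 1; funext ⟨j, hj⟩
    rw [if_neg (by omega)]; congr 1; ext; dsimp only [idx]; omega
  have eR : place (n + 1) μ 0 s = μ (update g 0 (μ (update f (Fin.last n) (g 0)))) := by
    simp only [place, s]; congr 1; funext ⟨i, hi⟩
    simp only [update_apply, Fin.ext_iff, Fin.val_zero]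
    split_ifs <;> first | (exfalso; omega) | (congr 1; ext; dsimp only [idx]; omega) | skip
    congr 1; funext ⟨j, hj⟩
    simp only [update_apply, Fin.ext_iff, Fin.val_last, zero_add]
    split_ifs <;> first | (exfalso; omega) | (congr 1; ext; dsimp only [idx, Fin.val_zero]; omega)
  rw [← eL, ← eR]
  exact hassoc s n 0 (by omega) (by omega)

lemma map_update_map (hassoc : TotAssoc (n + 1) μ) (hcomm : CommOp (n + 1) μ)
    (f g : Fin (n + 1) → S) (i j : Fin (n + 1)) :
    μ (update f i (μ g)) = μ (update g j (μ (update f i (g j)))) := by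
  calc μ (update f i (μ g))
      = μ (update (f ∘ Equiv.swap i (Fin.last n)) (Fin.last n) (μ (g ∘ Equiv.swap j 0))) := by
        rw [hcomm, hcomm.map_update_swap f i (Fin.last n)]
    _ = μ (update (g ∘ Equiv.swap j 0) 0
          (μ (update (f ∘ Equiv.swap i (Fin.last n)) (Fin.last n) (g j)))) := by
        rw [hassoc.map_update_last_map]; simp only [comp_apply, Equiv.swap_apply_right]
    _ = μ (update g j (μ (update f i (g j)))) := by
        rw [← hcomm.map_update_swap, ← hcomm.map_update_swap]

lemma map_update_transl (hassoc : TotAssoc (n + 1) μ) (hcomm : CommOp (n + 1) μ)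
    (f : Fin (n + 1) → S) (i : Fin (n + 1)) (u v : S) :
    μ (update f i (transl (n + 1) μ u v)) = transl (n + 1) μ u (μ (update f i v)) := by
  simp only [transl, repv_eq_update]
  rw [map_update_map hassoc hcomm f _ i (Fin.last n)]
  simp only [update_idem, update_self]

lemma transl_commute (hassoc : TotAssoc (n + 1) μ) (hcomm : CommOp (n + 1) μ) (u v : S) :
    Function.Commute (transl (n + 1) μ u) (transl (n + 1) μ v) := by
  intro w
  simpa only [transl, repv_eq_update, update_idem] using
    (map_update_transl hassoc hcomm (repv (n + 1) v w) (Fin.last n) u w).symm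

lemma transl_transl (hassoc : TotAssoc (n + 1) μ) (hcomm : CommOp (n + 1) μ) (u v t : S) :
    transl (n + 1) μ (transl (n + 1) μ u v) t =
      (transl (n + 1) μ u)^[n] (transl (n + 1) μ v t) := by
  -- `mix k` is `(v, …, v, t)` with its first `k` entries replaced by `transl u v`; each
  -- replacement pulls one factor `transl u` out of the product.
  let mix (k : ℕ) : Fin (n + 1) → S :=
    fun i => if i.val < k then transl (n + 1) μ u v else repv (n + 1) v t i
  have hmix : ∀ k ≤ n, μ (mix k) = (transl (n + 1) μ u)^[k] (transl (n + 1) μ v t) := by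
    intro k hk
    induction k with
    | zero => simp [mix, transl]
    | succ k ih =>
      have hk' : k < n + 1 := by omega
      have h1 : mix (k + 1) = update (mix k) ⟨k, hk'⟩ (transl (n + 1) μ u v) := by
        funext i; simp only [mix, update_apply, Fin.ext_iff]; split_ifs <;> first | rfl | omega
      have h2 : mix k = update (mix k) ⟨k, hk'⟩ v := by
        funext i; simp only [mix, repv, update_apply, Fin.ext_iff]
        split_ifs <;> first | rfl | omega
      rw [h1, map_update_transl hassoc hcomm, ← h2, ih (by omega), iterate_succ_apply']
  have hmix_n : mix n = repv (n + 1) (transl (n + 1) μ u v) t := by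
    funext i; simp only [mix, repv]; split_ifs <;> first | rfl | omega
  rw [← hmix n le_rfl, hmix_n, transl]

end

/-- In a commutative `m`-ary semigroup the class of
`(μ(a, b^{m-1}), μ(a^{m-1}, b))` is a querelement of the class of `(a,b)`:
the componentwise `m`-ary product of `m-1` copies of `(a,b)` with it, namely
`(μ(a^{m-1}, μ(b^{m-1},a)), μ(b^{m-1}, μ(a^{m-1},b)))`, is twisted-equivalent
to `(a,b)`. -/
theorem mary_querelement {S : Type*} (m : ℕ) (hm : 2 ≤ m)
    (μ : (Fin m → S) → S) (hassoc : TotAssoc m μ) (hcomm : CommOp m μ) (a b : S) :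
    ∃ z : S,
      twist m μ (μ (repv m a (μ (repv m b a)))) b z =
        twist m μ a (μ (repv m b (μ (repv m a b)))) z := by
  obtain ⟨n, rfl⟩ : ∃ n, m = n + 1 := ⟨m - 1, by omega⟩
  have hAB := transl_commute hassoc hcomm a b
  refine ⟨a, ?_⟩
  change transl _ μ (transl _ μ a (transl _ μ b a)) (transl _ μ b a) =
    transl _ μ a (transl _ μ (transl _ μ b (transl _ μ a b)) a)
  rw [transl_transl hassoc hcomm, transl_transl hassoc hcomm, transl_transl hassoc hcomm,
    transl_transl hassoc hcomm]
  rw [← (hAB.iterate_right n).eq, ← iterate_succ_apply, ← (hAB.iterate_iterate n n).eq,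
    ← iterate_succ_apply' (transl _ μ a)]
end

section
/- Let S be the set of 2×2 complex matrices of the form [[u,0],[0,0]] with the 4-ary operation μ(a₁,a₂,a₃,a₄) = a₁ + ε a₂ + ε² a₃ + a₄ where ε = e^{2πi/3}. Then μ is totally associative, S is idempotent in the sense μ(a,a,a,a) = a, and moreover μ(a,a,a,b) = b for all a,b ∈ S; consequently the twisted equivalence relation on S × S identifies all pairs, so the 4-ary completion group is trivial. -/
open Matrix Complex

/-!
Since `1 + ε + ε² = 0`, the first three arguments of `μ(a, a, a, b)` cancel and it equals `b`.
Since `ε³ = 1`, every placement of the inner `μ` in `μ∘²(x₁, …, x₇)` gives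
`x₁ + εx₂ + ε²x₃ + x₄ + εx₅ + ε²x₆ + x₇`. In the twisted relation both sides therefore
reduce to `μ(b, b, b, z) = z`, for any `z`. None of this uses the shape of the matrices in `S`,
which only matters for `S` being closed under `μ`.
-/

/-- A primitive cube root of unity. -/
noncomputable def ε : ℂ := Complex.exp (2 * Real.pi * Complex.I / 3)

/-- The set of matrices of the form `[[u,0],[0,0]]`, `u ∈ ℂ`. -/
def Sm : Set (Matrix (Fin 2) (Fin 2) ℂ) :=
  {A | ∃ u : ℂ, A = Matrix.of ![![u, 0], ![0, 0]]}

/-- The 4-ary operation `μ(a₁,a₂,a₃,a₄) = a₁ + ε·a₂ + ε²·a₃ + a₄`. -/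
noncomputable def μ4 (a b c d : Matrix (Fin 2) (Fin 2) ℂ) :
    Matrix (Fin 2) (Fin 2) ℂ :=
  a + ε • b + ε ^ 2 • c + d

section TwistedSum

variable {R M : Type*} [CommRing R] [AddCommGroup M] [Module R M]

def twistedSum (ω : R) (a b c d : M) : M :=
  a + ω • b + ω ^ 2 • c + d

variable {ω : R}

theorem twistedSum_self_self_self (hω : 1 + ω + ω ^ 2 = 0) (a b : M) :
    twistedSum ω a a a b = b := by
  calc twistedSum ω a a a b = (1 + ω + ω ^ 2) • a + b := by
        simp only [twistedSum, add_smul, one_smul]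
    _ = b := by rw [hω, zero_smul, zero_add]

theorem twistedSum_assoc (hω : ω ^ 3 = 1) (x₁ x₂ x₃ x₄ x₅ x₆ x₇ : M) :
    twistedSum ω (twistedSum ω x₁ x₂ x₃ x₄) x₅ x₆ x₇ =
        twistedSum ω x₁ (twistedSum ω x₂ x₃ x₄ x₅) x₆ x₇ ∧
      twistedSum ω x₁ (twistedSum ω x₂ x₃ x₄ x₅) x₆ x₇ =
        twistedSum ω x₁ x₂ (twistedSum ω x₃ x₄ x₅ x₆) x₇ ∧
      twistedSum ω x₁ x₂ (twistedSum ω x₃ x₄ x₅ x₆) x₇ =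
        twistedSum ω x₁ x₂ x₃ (twistedSum ω x₄ x₅ x₆ x₇) := by
  have h₃ : ω * ω ^ 2 = 1 := by rw [← pow_succ', hω]
  have h₃' : ω ^ 2 * ω = 1 := by rw [← pow_succ, hω]
  have h₄ : (ω ^ 2) ^ 2 = ω := by rw [← pow_mul, show 2 * 2 = 3 + 1 from rfl, pow_succ, hω, one_mul]
  refine ⟨?_, ?_, ?_⟩ <;>
  · simp only [twistedSum, smul_add, smul_smul, ← sq, h₃, h₃', h₄, one_smul]
    abel

end TwistedSum

theorem ε_isPrimitiveRoot : IsPrimitiveRoot ε 3 := by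
  simpa [ε] using Complex.isPrimitiveRoot_exp 3 (by norm_num)

theorem one_add_ε_add_ε_sq : 1 + ε + ε ^ 2 = 0 := by
  simpa [Finset.sum_range_succ] using ε_isPrimitiveRoot.geom_sum_eq_zero (by norm_num)

theorem μ4_eq_twistedSum : μ4 = twistedSum ε := rfl

def smSubmodule : Submodule ℂ (Matrix (Fin 2) (Fin 2) ℂ) where
  carrier := Sm
  add_mem' := by
    rintro _ _ ⟨u, rfl⟩ ⟨v, rfl⟩
    exact ⟨u + v, by ext i j; fin_cases i <;> fin_cases j <;> simp⟩
  zero_mem' := ⟨0, by ext i j; fin_cases i <;> fin_cases j <;> simp⟩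
  smul_mem' := by
    rintro c _ ⟨u, rfl⟩
    exact ⟨c * u, by ext i j; fin_cases i <;> fin_cases j <;> simp⟩

theorem μ4_mem_Sm {a b c d : Matrix (Fin 2) (Fin 2) ℂ} (ha : a ∈ Sm) (hb : b ∈ Sm)
    (hc : c ∈ Sm) (hd : d ∈ Sm) : μ4 a b c d ∈ Sm := by
  change μ4 a b c d ∈ smSubmodule
  exact add_mem (add_mem (add_mem ha (Submodule.smul_mem _ _ hb)) (Submodule.smul_mem _ _ hc)) hd

/-- The 4-ary matrix operation `μ(a₁,a₂,a₃,a₄) = a₁ + εa₂ + ε²a₃ + a₄` preserves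
`Sm`, is totally associative, is idempotent (`μ(a,a,a,a) = a`), satisfies
`μ(a,a,a,b) = b`, and hence the twisted relation identifies all pairs, so the
4-ary completion group is trivial. -/
theorem matrix_4ary_trivial_K0 :
    (∀ a ∈ Sm, ∀ b ∈ Sm, ∀ c ∈ Sm, ∀ d ∈ Sm, μ4 a b c d ∈ Sm) ∧
    (∀ x1 x2 x3 x4 x5 x6 x7 : Matrix (Fin 2) (Fin 2) ℂ,
      μ4 (μ4 x1 x2 x3 x4) x5 x6 x7 = μ4 x1 (μ4 x2 x3 x4 x5) x6 x7 ∧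
      μ4 x1 (μ4 x2 x3 x4 x5) x6 x7 = μ4 x1 x2 (μ4 x3 x4 x5 x6) x7 ∧
      μ4 x1 x2 (μ4 x3 x4 x5 x6) x7 = μ4 x1 x2 x3 (μ4 x4 x5 x6 x7)) ∧
    (∀ a ∈ Sm, μ4 a a a a = a) ∧
    (∀ a ∈ Sm, ∀ b ∈ Sm, μ4 a a a b = b) ∧
    (∀ a₁ ∈ Sm, ∀ b₁ ∈ Sm, ∀ a₂ ∈ Sm, ∀ b₂ ∈ Sm, ∃ z ∈ Sm,
      μ4 (μ4 a₁ a₁ a₁ b₂) b₂ b₂ z = μ4 (μ4 a₂ a₂ a₂ b₁) b₁ b₁ z) := by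
  have hμ : ∀ a b, μ4 a a a b = b := by
    rw [μ4_eq_twistedSum]
    exact twistedSum_self_self_self one_add_ε_add_ε_sq
  refine ⟨fun a ha b hb c hc d hd => μ4_mem_Sm ha hb hc hd,
    by rw [μ4_eq_twistedSum]; exact twistedSum_assoc ε_isPrimitiveRoot.pow_eq_one,
    fun a _ => hμ a a, fun a _ b _ => hμ a b, ?_⟩
  intro a₁ _ b₁ _ a₂ _ b₂ _
  exact ⟨0, smSubmodule.zero_mem, by simp only [hμ]⟩
end
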